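/- (Proposition 3(a)) Let q ∈ ℂ with q ≠ 0 and q² ≠ 1, and let V be a module over H_n(q) such that the action of y_i on V is diagonalizable (V is spanned by eigenvectors of y_i), where 1 ≤ i ≤ n−1. If v ∈ V satisfies y_i · v = a v and y_{i+1} · v = a v for the same scalar a ∈ ℂ, then v = 0. In other words, y_i and y_{i+1} have no nonzero common eigenvector with equal eigenvalues. -/

import Mathlib

open FreeAlgebra in
/-- Defining relations of the A-type Hecke algebra `H_n(q)` on generators
`σ_1, …, σ_{n-1}` (generator `i : Fin (n-1)` represents `σ_{i+1}`). -/
inductive HeckeRel (n : ℕ) (q : ℂ) :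
    FreeAlgebra ℂ (Fin (n - 1)) → FreeAlgebra ℂ (Fin (n - 1)) → Prop
  | braid (i j : Fin (n - 1)) (h : (i : ℕ) + 1 = (j : ℕ)) :
      HeckeRel n q (ι ℂ i * ι ℂ j * ι ℂ i) (ι ℂ j * ι ℂ i * ι ℂ j)
  | comm (i j : Fin (n - 1)) (h : (i : ℕ) + 1 < (j : ℕ)) :
      HeckeRel n q (ι ℂ i * ι ℂ j) (ι ℂ j * ι ℂ i)
  | quad (i : Fin (n - 1)) :
      HeckeRel n q (ι ℂ i * ι ℂ i) (1 + (q - q⁻¹) • ι ℂ i)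

/-- The A-type Hecke algebra `H_n(q)`. -/
abbrev HeckeAlgebra (n : ℕ) (q : ℂ) := RingQuot (HeckeRel n q)

/-- The generator `σ_k` (1-based: valid for `1 ≤ k ≤ n-1`; junk value `1` otherwise). -/
noncomputable def heckeGen (n : ℕ) (q : ℂ) (k : ℕ) : HeckeAlgebra n q :=
  if h : k - 1 < n - 1 then RingQuot.mkAlgHom ℂ (HeckeRel n q) (FreeAlgebra.ι ℂ ⟨k - 1, h⟩)
  else 1

/-- The Jucys–Murphy elements, 1-based: `jm 1 = 1`, `jm (i+1) = σ_i * jm i * σ_i`. -/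
noncomputable def jm (n : ℕ) (q : ℂ) : ℕ → HeckeAlgebra n q
  | 0 => 1
  | 1 => 1
  | (i + 2) => heckeGen n q (i + 1) * jm n q (i + 1) * heckeGen n q (i + 1)

/-!
Write `Y = y_i`, `S = σ_i` and `c = q - q⁻¹`, so that `y_{i+1} = S Y S` and `S⁻¹ = S - c`.
If `Y v = a v` and `S Y S v = a v`, then `Y (S v) = a S⁻¹ v = a S v - a c v`, so
`(Y - a)² (S v) = -a c (Y - a) v = 0`. As `Y` is diagonalizable, already `(Y - a) (S v) = 0`,
i.e. `a c v = 0`. Since `c ≠ 0` and `Y` is invertible (so `a ≠ 0` unless `v = 0`), `v = 0`.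
-/

namespace Module.End

variable {R M : Type*} [CommRing R] [IsDomain R] [AddCommGroup M] [Module R M]
  [IsTorsionFree R M]

theorem maxGenEigenspace_eq_eigenspace_of_iSup_eigenspace_eq_top {f : End R M}
    (hf : ⨆ μ, f.eigenspace μ = ⊤) (μ : R) : f.maxGenEigenspace μ = f.eigenspace μ := by
  refine le_antisymm (fun w hw => ?_) eigenspace_le_maxGenEigenspace
  have hw' : w ∈ ⨆ ν, f.eigenspace ν := hf ▸ Submodule.mem_top
  rw [iSup_split _ (· = μ)] at hw'
  obtain ⟨x, hx, y, hy, rfl⟩ := Submodule.mem_sup.mp hw'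
  simp only [iSup_iSup_eq_left] at hx
  have hy_gen : y ∈ f.maxGenEigenspace μ := by
    simpa using sub_mem hw (eigenspace_le_maxGenEigenspace hx)
  have hy_other : y ∈ ⨆ ν, ⨆ (_ : ν ≠ μ), f.maxGenEigenspace ν :=
    iSup₂_mono (fun _ _ => eigenspace_le_maxGenEigenspace) hy
  have hy0 : y = 0 := (f.independent_maxGenEigenspace μ).le_bot ⟨hy_gen, hy_other⟩
  simpa [hy0] using hx

theorem eq_zero_of_apply_eq_smul_of_conj_apply_eq_smul {Y S : End R M} {c a : R} {v : M}
    (hS : S * S = 1 + c • S) (hc : c ≠ 0) (hY : IsUnit Y) (hdiag : ⨆ μ, Y.eigenspace μ = ⊤)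
    (hYv : Y v = a • v) (hSYSv : (S * Y * S) v = a • v) : v = 0 := by
  have hS_inv : (S - c • 1) * S = 1 := by
    rw [sub_mul, hS, smul_mul_assoc, one_mul]; abel
  have hYSv : (Y - a • 1) (S v) = -((a * c) • v) := by
    have : Y (S v) = (S - c • 1) (a • v) := by
      rw [← hSYSv, ← mul_apply, ← mul_apply, ← mul_assoc, ← mul_assoc, hS_inv, one_mul]
    simp only [LinearMap.sub_apply, LinearMap.smul_apply, one_apply, this, map_smul]
    module
  have hSv : S v ∈ Y.eigenspace a := by
    rw [← maxGenEigenspace_eq_eigenspace_of_iSup_eigenspace_eq_top hdiag, mem_maxGenEigenspace]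
    refine ⟨2, ?_⟩
    rw [pow_two, mul_apply, hYSv, map_neg, map_smul]
    simp only [LinearMap.sub_apply, LinearMap.smul_apply, one_apply, hYv, sub_self, smul_zero,
      neg_zero]
  have hacv : (a * c) • v = 0 := by
    rw [mem_eigenspace_iff] at hSv
    simpa [hSv] using hYSv.symm
  rcases smul_eq_zero.mp hacv with hac | hv
  · have ha : a = 0 := (mul_eq_zero.mp hac).resolve_right hc
    rw [ha, zero_smul] at hYv
    exact ((isUnit_iff Y).mp hY).injective (hYv.trans (map_zero Y).symm)
  · exact hv

end Module.End

theorem heckeGen_mul_self {n : ℕ} {q : ℂ} {k : ℕ} (hk : k - 1 < n - 1) :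
    heckeGen n q k * heckeGen n q k = 1 + (q - q⁻¹) • heckeGen n q k := by
  rw [heckeGen, dif_pos hk, ← map_mul, RingQuot.mkAlgHom_rel ℂ (HeckeRel.quad ⟨k - 1, hk⟩),
    map_add, map_one, map_smul]

theorem isUnit_heckeGen (n : ℕ) (q : ℂ) (k : ℕ) : IsUnit (heckeGen n q k) := by
  by_cases hk : k - 1 < n - 1
  · refine ⟨⟨heckeGen n q k, heckeGen n q k - (q - q⁻¹) • 1, ?_, ?_⟩, rfl⟩
    · rw [mul_sub, heckeGen_mul_self hk, mul_smul_comm, mul_one]; abel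
    · rw [sub_mul, heckeGen_mul_self hk, smul_mul_assoc, one_mul]; abel
  · simp [heckeGen, hk]

theorem isUnit_jm (n : ℕ) (q : ℂ) : ∀ k, IsUnit (jm n q k)
  | 0 | 1 => isUnit_one
  | k + 2 => ((isUnit_heckeGen n q _).mul (isUnit_jm n q (k + 1))).mul (isUnit_heckeGen n q _)

theorem jm_no_equal_eigenvalues_general (n : ℕ) (q : ℂ) (hq : q ≠ 0) (hq2 : q ^ 2 ≠ 1)
    (V : Type) [AddCommGroup V] [Module ℂ V]
    (ρ : HeckeAlgebra n q →ₐ[ℂ] Module.End ℂ V) (i : ℕ) (hi1 : 1 ≤ i) (hin : i ≤ n - 1)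
    (hdiag : (⨆ μ : ℂ, Module.End.eigenspace (ρ (jm n q i)) μ) = ⊤)
    (v : V) (a : ℂ)
    (hva : ρ (jm n q i) v = a • v) (hvb : ρ (jm n q (i + 1)) v = a • v) :
    v = 0 := by
  obtain ⟨m, rfl⟩ : ∃ m, i = m + 1 := ⟨i - 1, by omega⟩
  have hc : q - q⁻¹ ≠ 0 := by
    rw [sub_ne_zero]
    intro h
    exact hq2 (by field_simp at h; linear_combination h)
  have hS : ρ (heckeGen n q (m + 1)) * ρ (heckeGen n q (m + 1)) =
      1 + (q - q⁻¹) • ρ (heckeGen n q (m + 1)) := by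
    rw [← map_mul, heckeGen_mul_self (by omega), map_add, map_one, map_smul]
  refine Module.End.eq_zero_of_apply_eq_smul_of_conj_apply_eq_smul hS hc
    ((isUnit_jm n q _).map ρ) hdiag hva ?_
  simpa only [jm, map_mul] using hvb

/-- Proposition 3(a): if the action of `y_i` on `V` is diagonalizable,
then `y_i` and `y_{i+1}` have no nonzero common eigenvector with equal eigenvalues. -/
theorem jm_no_equal_eigenvalues (n : ℕ) (q : ℂ) (hq : q ≠ 0) (hq2 : q ^ 2 ≠ 1)
    (hn : 1 ≤ n)
    (V : Type) [AddCommGroup V] [Module ℂ V]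
    (ρ : HeckeAlgebra n q →ₐ[ℂ] Module.End ℂ V) (i : ℕ) (hi1 : 1 ≤ i) (hin : i ≤ n - 1)
    (hdiag : (⨆ μ : ℂ, Module.End.eigenspace (ρ (jm n q i)) μ) = ⊤)
    (v : V) (a : ℂ)
    (hva : ρ (jm n q i) v = a • v) (hvb : ρ (jm n q (i + 1)) v = a • v) :
    v = 0 :=
  jm_no_equal_eigenvalues_general n q hq hq2 V ρ i hi1 hin hdiag v a hva hvb
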